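/- Let α,β,γ > -1 and define on the triangle T = {(x,y) : x ≥ 0, y ≥ 0, x+y ≤ 1} the polynomials J_{k,n}^{α,β,γ}(x,y) := (x+y)^k J_k^{α,β}((y-x)/(x+y)) J_{n-k}^{2k+α+β+1,γ}(1-2x-2y) for 0 ≤ k ≤ n. Then for (k,n) ≠ (j,m) with 0 ≤ k ≤ n and 0 ≤ j ≤ m, the integral ∫_T J_{k,n}^{α,β,γ}(x,y) J_{j,m}^{α,β,γ}(x,y) x^α y^β (1-x-y)^γ dx dy = 0. -/

import Mathlib

open Finset MeasureTheory

/-- Pochhammer symbol `(a)_m` (rising factorial). -/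
noncomputable def poch (a : ℝ) (m : ℕ) : ℝ := (ascPochhammer ℝ m).eval a

/-- Extended Jacobi polynomial `J_n^{α,β}(t)`.  Terms with vanishing denominator
(which are exactly the terms with index below `ι₀`) are `0` by the division
convention, so this agrees with the paper's definition. -/
noncomputable def J (α β : ℝ) (n : ℕ) (t : ℝ) : ℝ :=
  ∑ k ∈ Finset.range (n + 1),
    poch ((k : ℝ) + α + 1) (n - k) /
      (((n - k).factorial : ℝ) * (k.factorial : ℝ) *
        poch ((n : ℝ) + α + β + (k : ℝ) + 1) (n - k)) *
      ((t - 1) / 2) ^ k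

/-- Classical Jacobi polynomial `P_n^{(α,β)}(t)`. -/
noncomputable def P (α β : ℝ) (n : ℕ) (t : ℝ) : ℝ :=
  ∑ k ∈ Finset.range (n + 1),
    poch ((k : ℝ) + α + 1) (n - k) * poch ((n : ℝ) + α + β + 1) k /
      (((n - k).factorial : ℝ) * (k.factorial : ℝ)) * ((t - 1) / 2) ^ k

/-- The triangle `{(x,y) : x ≥ 0, y ≥ 0, x + y ≤ 1}`. -/
def Tset : Set (ℝ × ℝ) := {p | 0 ≤ p.1 ∧ 0 ≤ p.2 ∧ p.1 + p.2 ≤ 1}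

/-- Jacobi polynomial on the triangle,
`J_{k,n}^{α,β,γ}(x,y) = (x+y)^k J_k^{α,β}((y-x)/(x+y)) J_{n-k}^{2k+α+β+1,γ}(1-2x-2y)`. -/
noncomputable def JT (α β γ : ℝ) (k n : ℕ) (x y : ℝ) : ℝ :=
  (x + y) ^ k * J α β k ((y - x) / (x + y)) *
    J (2 * (k : ℝ) + α + β + 1) γ (n - k) (1 - 2 * x - 2 * y)

/-!
In the collapsed coordinates `x = s u`, `y = s (1 - u)` (Jacobian `s`) the triangle becomes the
unit square and the integrand splits into a function of `s` times a function of `u`: the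
`u`-factor is `J_k^{α,β} J_j^{α,β}(1 - 2u)` against `u^α (1-u)^β`, the `s`-factor is
`J_{n-k} J_{m-j}(1 - 2s)` with parameters `(2k+α+β+1, γ)` against `s^{k+j+α+β+1} (1-s)^γ`.
If `k ≠ j` the `u`-integral vanishes, otherwise the `s`-integral does, both by the
orthogonality of `J_p(1 - 2u)` and `J_q(1 - 2u)` on `[0, 1]`. That in turn holds because
`J_n(1 - 2u)` is orthogonal to `u^i` for `i < n`: by the beta integral this moment is an `n`-th
finite difference of a polynomial of degree `n - 1`.
-/
open Real Set Polynomial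
open scoped fwdDiff

section Beta

variable {a b : ℝ}

lemma cpow_mul_one_sub_cpow_eq_ofReal {x : ℝ} (hx : x ∈ Icc (0 : ℝ) 1) :
    (x : ℂ) ^ ((a + 1 : ℂ) - 1) * (1 - (x : ℂ)) ^ ((b + 1 : ℂ) - 1) =
      ((x ^ a * (1 - x) ^ b : ℝ) : ℂ) := by
  rw [add_sub_cancel_right, add_sub_cancel_right, Complex.ofReal_mul,
    Complex.ofReal_cpow hx.1, Complex.ofReal_cpow (sub_nonneg.2 hx.2), Complex.ofReal_sub,
    Complex.ofReal_one]

lemma intervalIntegrable_rpow_mul_one_sub_rpow (ha : -1 < a) (hb : -1 < b) :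
    IntervalIntegrable (fun x : ℝ => x ^ a * (1 - x) ^ b) volume 0 1 := by
  have h := Complex.betaIntegral_convergent (u := a + 1) (v := b + 1)
    (by simp; linarith) (by simp; linarith)
  rw [intervalIntegrable_iff_integrableOn_Ioc_of_le zero_le_one] at h ⊢
  refine IntegrableOn.congr_fun h.re (fun x hx => ?_) measurableSet_Ioc
  simp only [cpow_mul_one_sub_cpow_eq_ofReal (Ioc_subset_Icc_self hx), RCLike.re_to_complex,
    Complex.ofReal_re]

lemma integral_rpow_mul_one_sub_rpow (ha : -1 < a) (hb : -1 < b) :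
    ∫ x in (0 : ℝ)..1, x ^ a * (1 - x) ^ b =
      Gamma (a + 1) * Gamma (b + 1) / Gamma (a + b + 2) := by
  have h := Complex.betaIntegral_eq_Gamma_mul_div (a + 1) (b + 1)
    (by simp; linarith) (by simp; linarith)
  rw [Complex.betaIntegral,
    intervalIntegral.integral_congr (g := fun x : ℝ => ((x ^ a * (1 - x) ^ b : ℝ) : ℂ))
      fun x hx => cpow_mul_one_sub_cpow_eq_ofReal (by rwa [Set.uIcc_of_le zero_le_one] at hx),
    intervalIntegral.integral_ofReal,
    show (a + 1 : ℂ) + (b + 1) = ((a + b + 2 : ℝ) : ℂ) by push_cast; ring] at h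
  norm_cast at h
  rw [Complex.Gamma_ofReal, Complex.Gamma_ofReal, Complex.Gamma_ofReal] at h
  exact_mod_cast h

end Beta

lemma poch_eq_Gamma_div {x : ℝ} (hx : 0 < x) (m : ℕ) : poch x m = Gamma (x + m) / Gamma x := by
  induction m with
  | zero => simp [poch, (Gamma_pos_of_pos hx).ne']
  | succ m ih =>
    rw [poch, ascPochhammer_succ_right, eval_mul, ← poch, ih, Nat.cast_succ, ← add_assoc,
      Gamma_add_one (by positivity)]
    simp only [eval_add, eval_X, eval_natCast]
    field_simp

theorem Polynomial.sum_range_alternating_choose_mul_eval_eq_zero {R : Type*} [CommRing R]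
    (p : R[X]) {n : ℕ} (hp : p.natDegree < n) :
    ∑ k ∈ range (n + 1), (-1) ^ k * (n.choose k : R) * p.eval (k : R) = 0 := by
  calc ∑ k ∈ range (n + 1), (-1) ^ k * (n.choose k : R) * p.eval (k : R)
      = (-1) ^ n * ∑ k ∈ range (n + 1),
          ((-1 : ℤ) ^ (n - k) * (n.choose k : ℤ)) • p.eval (0 + k • (1 : R)) := by
        rw [mul_sum]
        refine sum_congr rfl fun k hk => ?_
        obtain ⟨l, rfl⟩ := Nat.exists_eq_add_of_le (Nat.lt_succ_iff.1 (Finset.mem_range.1 hk))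
        simp only [zsmul_eq_mul, nsmul_one, zero_add, add_tsub_cancel_left, pow_add]
        push_cast
        ring_nf
        rw [pow_mul', neg_one_sq, one_pow, mul_one]
    _ = (-1) ^ n * (Δ_[1])^[n] p.eval 0 := by rw [fwdDiff_iter_eq_sum_shift]
    _ = 0 := by rw [Polynomial.fwdDiff_iter_eq_zero_of_degree_lt hp, Pi.zero_apply, mul_zero]

noncomputable def jacobiCoeff (a b : ℝ) (n i : ℕ) : ℝ :=
  poch ((i : ℝ) + a + 1) (n - i) /
    (((n - i).factorial : ℝ) * (i.factorial : ℝ) *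
      poch ((n : ℝ) + a + b + (i : ℝ) + 1) (n - i))

lemma J_one_sub_two_mul (a b : ℝ) (n : ℕ) (u : ℝ) :
    J a b n (1 - 2 * u) = ∑ i ∈ range (n + 1), jacobiCoeff a b n i * (-u) ^ i := by
  simp only [J, jacobiCoeff, show (1 - 2 * u - 1) / 2 = -u by ring]

@[fun_prop]
lemma continuous_J (a b : ℝ) (n : ℕ) : Continuous (J a b n) := by
  unfold J
  fun_prop

lemma jacobiCoeff_mul_Gamma_div_Gamma {a b : ℝ} (ha : -1 < a) (hb : -1 < b) {n i k : ℕ}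
    (hi : i < n) (hk : k ≤ n) :
    jacobiCoeff a b n k * (Gamma (a + k + i + 1) / Gamma (a + b + k + i + 2)) =
      Gamma (n + a + 1) / (Gamma (2 * n + a + b + 1) * n.factorial) *
        (n.choose k * (poch (k + (a + 1)) i * poch (k + (a + b + i + 2)) (n - 1 - i))) := by
  have hk0 : (0 : ℝ) ≤ k := k.cast_nonneg
  have hi0 : (0 : ℝ) ≤ i := i.cast_nonneg
  have hn : (i : ℝ) + 1 ≤ n := by exact_mod_cast hi
  rw [jacobiCoeff, poch_eq_Gamma_div (by linarith), poch_eq_Gamma_div (by linarith),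
    poch_eq_Gamma_div (by linarith), poch_eq_Gamma_div (by linarith), Nat.cast_choose ℝ hk,
    Nat.cast_sub hk, Nat.cast_sub (by omega : i ≤ n - 1), Nat.cast_sub (by omega : 1 ≤ n),
    Nat.cast_one]
  have hG : ∀ x : ℝ, 0 < x → Gamma x ≠ 0 := fun x hx => (Gamma_pos_of_pos hx).ne'
  rw [show (k : ℝ) + a + 1 + (n - k) = n + a + 1 by ring,
    show (n : ℝ) + a + b + k + 1 + (n - k) = 2 * n + a + b + 1 by ring,
    show (k : ℝ) + (a + 1) + i = a + k + i + 1 by ring,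
    show (k : ℝ) + (a + b + i + 2) + (n - 1 - i) = n + a + b + k + 1 by ring,
    show (k : ℝ) + (a + 1) = k + a + 1 by ring,
    show (k : ℝ) + (a + b + i + 2) = a + b + k + i + 2 by ring]
  field_simp [hG (k + a + 1) (by linarith), hG (n + a + b + k + 1) (by linarith),
    hG (a + b + k + i + 2) (by linarith), hG (2 * n + a + b + 1) (by linarith)]

lemma sum_jacobiCoeff_mul_Gamma_div_Gamma_eq_zero {a b : ℝ} (ha : -1 < a) (hb : -1 < b)
    {n i : ℕ} (hi : i < n) :
    ∑ k ∈ range (n + 1),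
      (-1) ^ k * (jacobiCoeff a b n k * (Gamma (a + k + i + 1) / Gamma (a + b + k + i + 2))) =
      0 := by
  set q : ℝ[X] := (ascPochhammer ℝ i).comp (X + C (a + 1)) *
    (ascPochhammer ℝ (n - 1 - i)).comp (X + C (a + b + i + 2))
  have hq : q.natDegree < n := by
    refine natDegree_mul_le.trans_lt ?_
    simp only [natDegree_comp, ascPochhammer_natDegree, natDegree_X_add_C, mul_one]
    omega
  calc
    _ = Gamma (n + a + 1) / (Gamma (2 * n + a + b + 1) * n.factorial) *
          ∑ k ∈ range (n + 1), (-1) ^ k * (n.choose k : ℝ) * q.eval (k : ℝ) := by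
      rw [mul_sum]
      refine sum_congr rfl fun k hk => ?_
      rw [jacobiCoeff_mul_Gamma_div_Gamma ha hb hi (Nat.lt_succ_iff.1 (Finset.mem_range.1 hk))]
      simp only [q, poch, eval_mul, eval_comp, eval_add, eval_X, eval_C]
      ring
    _ = 0 := by rw [q.sum_range_alternating_choose_mul_eval_eq_zero hq, mul_zero]

section Moments

variable {a b : ℝ} (ha : -1 < a) (hb : -1 < b)
include ha hb

lemma intervalIntegrable_mul_rpow_mul_one_sub_rpow {f : ℝ → ℝ} (hf : Continuous f) :
    IntervalIntegrable (fun u => f u * (u ^ a * (1 - u) ^ b)) volume 0 1 :=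
  (intervalIntegrable_rpow_mul_one_sub_rpow ha hb).continuousOn_mul hf.continuousOn

lemma integral_pow_mul_rpow_mul_one_sub_rpow (r : ℕ) :
    ∫ u in (0 : ℝ)..1, u ^ r * (u ^ a * (1 - u) ^ b) =
      Gamma (a + r + 1) * Gamma (b + 1) / Gamma (a + b + r + 2) := by
  rw [intervalIntegral.integral_congr_ae (g := fun u : ℝ => u ^ (a + r) * (1 - u) ^ b) ?_,
    integral_rpow_mul_one_sub_rpow (by linarith [r.cast_nonneg (α := ℝ)]) hb,
    show a + r + b + 2 = a + b + r + 2 by ring]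
  filter_upwards with u hu
  rw [uIoc_of_le zero_le_one] at hu
  rw [rpow_add hu.1, rpow_natCast]
  ring

lemma integral_J_mul_pow_eq_zero {n i : ℕ} (hi : i < n) :
    ∫ u in (0 : ℝ)..1, J a b n (1 - 2 * u) * u ^ i * (u ^ a * (1 - u) ^ b) = 0 := by
  have hexp : ∀ u : ℝ, J a b n (1 - 2 * u) * u ^ i * (u ^ a * (1 - u) ^ b) =
      ∑ k ∈ range (n + 1),
        (-1) ^ k * jacobiCoeff a b n k * (u ^ (k + i) * (u ^ a * (1 - u) ^ b)) := by
    intro u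
    rw [J_one_sub_two_mul, sum_mul, sum_mul]
    refine sum_congr rfl fun k _ => ?_
    rw [neg_pow, pow_add]
    ring
  simp_rw [hexp]
  rw [intervalIntegral.integral_finsetSum fun k _ =>
    (intervalIntegrable_mul_rpow_mul_one_sub_rpow ha hb (continuous_pow (k + i))).const_mul _]
  simp_rw [intervalIntegral.integral_const_mul, integral_pow_mul_rpow_mul_one_sub_rpow ha hb]
  calc
    _ = Gamma (b + 1) * ∑ k ∈ range (n + 1), (-1) ^ k *
          (jacobiCoeff a b n k * (Gamma (a + k + i + 1) / Gamma (a + b + k + i + 2))) := by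
      rw [mul_sum]
      refine sum_congr rfl fun k _ => ?_
      push_cast
      ring_nf
    _ = 0 := by rw [sum_jacobiCoeff_mul_Gamma_div_Gamma_eq_zero ha hb hi, mul_zero]

lemma integral_J_mul_J_eq_zero {p q : ℕ} (hpq : p ≠ q) :
    ∫ u in (0 : ℝ)..1,
      J a b p (1 - 2 * u) * J a b q (1 - 2 * u) * (u ^ a * (1 - u) ^ b) = 0 := by
  wlog hlt : p < q generalizing p q
  · refine (intervalIntegral.integral_congr fun u _ => ?_).trans (this hpq.symm (by omega))
    ring
  have hexp : ∀ u : ℝ, J a b p (1 - 2 * u) * J a b q (1 - 2 * u) * (u ^ a * (1 - u) ^ b) =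
      ∑ i ∈ range (p + 1), (-1) ^ i * jacobiCoeff a b p i *
        (J a b q (1 - 2 * u) * u ^ i * (u ^ a * (1 - u) ^ b)) := by
    intro u
    rw [J_one_sub_two_mul a b p, sum_mul, sum_mul]
    refine sum_congr rfl fun i _ => ?_
    rw [neg_pow]
    ring
  simp_rw [hexp]
  rw [intervalIntegral.integral_finsetSum fun i _ =>
    (intervalIntegrable_mul_rpow_mul_one_sub_rpow ha hb
      (by fun_prop : Continuous fun u : ℝ => J a b q (1 - 2 * u) * u ^ i)).const_mul _]
  exact sum_eq_zero fun i hi => by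
    rw [intervalIntegral.integral_const_mul, integral_J_mul_pow_eq_zero ha hb (by grind),
      mul_zero]

end Moments

/-- Collapsed coordinates on the triangle: `s = x + y` and `u = x / (x + y)`. -/
def triangleCoord (q : ℝ × ℝ) : ℝ × ℝ := (q.1 * q.2, q.1 * (1 - q.2))

noncomputable def fderivTriangleCoord (q : ℝ × ℝ) : ℝ × ℝ →L[ℝ] ℝ × ℝ :=
  (Matrix.toLin (.finTwoProd ℝ) (.finTwoProd ℝ)
    !![q.2, q.1; 1 - q.2, -q.1]).toContinuousLinearMap

theorem hasFDerivAt_triangleCoord (q : ℝ × ℝ) :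
    HasFDerivAt triangleCoord (fderivTriangleCoord q) q := by
  unfold fderivTriangleCoord
  rw [Matrix.toLin_finTwoProd_toContinuousLinearMap]
  refine (HasFDerivAt.prodMk (hasFDerivAt_fst.mul hasFDerivAt_snd)
    (hasFDerivAt_fst.mul ((hasFDerivAt_const 1 q).sub hasFDerivAt_snd))).congr_fderiv ?_
  ext <;> simp

theorem det_fderivTriangleCoord (q : ℝ × ℝ) : (fderivTriangleCoord q).det = -q.1 := by
  simp only [fderivTriangleCoord, LinearMap.det_toContinuousLinearMap, LinearMap.det_toLin,
    Matrix.det_fin_two_of]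
  ring

theorem triangleCoord_image :
    triangleCoord '' (Set.Ioc 0 1 ×ˢ Set.Icc 0 1) = Tset \ {0} := by
  ext ⟨x, y⟩
  simp only [Tset, Set.mem_image, Set.mem_prod, Set.mem_Ioc, Set.mem_Icc, Set.mem_sdiff,
    Set.mem_ofPred_eq, Set.mem_singleton_iff, Prod.ext_iff, triangleCoord, Prod.fst_zero,
    Prod.snd_zero, Prod.exists]
  constructor
  · rintro ⟨s, u, ⟨⟨hs0, hs1⟩, hu0, hu1⟩, rfl, rfl⟩
    refine ⟨⟨by positivity, mul_nonneg hs0.le (by linarith), by linarith⟩, fun h => ?_⟩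
    nlinarith [h.1, h.2]
  · rintro ⟨⟨hx, hy, hxy⟩, hne⟩
    have hs : 0 < x + y := by
      by_contra! h
      exact hne ⟨by linarith, by linarith⟩
    refine ⟨x + y, x / (x + y),
      ⟨⟨hs, hxy⟩, by positivity, div_le_one_of_le₀ (by linarith) hs.le⟩, by field_simp,
      by field_simp; ring⟩

theorem injOn_triangleCoord : InjOn triangleCoord (Set.Ioc 0 1 ×ˢ Set.Icc 0 1) := by
  rintro ⟨s, u⟩ ⟨⟨hs, -⟩, -⟩ ⟨s', u'⟩ - h
  simp only [triangleCoord, Prod.mk.injEq] at h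
  have hss : s = s' := by linarith [h.1, h.2]
  subst hss
  exact Prod.ext rfl (mul_left_cancel₀ hs.ne' h.1)

theorem setIntegral_Tset_eq_triangleCoord (F : ℝ × ℝ → ℝ) :
    ∫ p in Tset, F p = ∫ q in Set.Ioc 0 1 ×ˢ Set.Icc 0 1, q.1 * F (triangleCoord q) := by
  have hmeas : MeasurableSet (Set.Ioc (0 : ℝ) 1 ×ˢ Set.Icc (0 : ℝ) 1) :=
    measurableSet_Ioc.prod measurableSet_Icc
  rw [← setIntegral_congr_set (sdiff_null_ae_eq_self (s := Tset) (measure_singleton 0)),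
    ← triangleCoord_image, integral_image_eq_integral_abs_det_fderiv_smul volume hmeas
      (fun q _ => (hasFDerivAt_triangleCoord q).hasFDerivWithinAt) injOn_triangleCoord]
  refine setIntegral_congr_fun hmeas fun q hq => ?_
  rw [det_fderivTriangleCoord, abs_neg, abs_of_pos hq.1.1, smul_eq_mul]

theorem setIntegral_Tset_eq_mul_of_separable {Φ : ℝ × ℝ → ℝ} (F G : ℝ → ℝ)
    (hΦ : ∀ s u, 0 < s → u ∈ Set.Icc (0 : ℝ) 1 →
      s * Φ (triangleCoord (s, u)) = F s * G u) :
    ∫ p in Tset, Φ p = (∫ s in (0 : ℝ)..1, F s) * ∫ u in (0 : ℝ)..1, G u := by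
  rw [setIntegral_Tset_eq_triangleCoord,
    setIntegral_congr_fun (measurableSet_Ioc.prod measurableSet_Icc)
      fun q hq => hΦ q.1 q.2 hq.1.1 hq.2,
    Measure.volume_eq_prod, setIntegral_prod_mul, integral_Icc_eq_integral_Ioc,
    ← intervalIntegral.integral_of_le zero_le_one,
    ← intervalIntegral.integral_of_le zero_le_one]

lemma mul_JT_mul_JT_mul_weight_collapsed (α β γ : ℝ) (k n j m : ℕ) {s u : ℝ} (hs : 0 < s)
    (hu : u ∈ Set.Icc (0 : ℝ) 1) :
    s * (JT α β γ k n (s * u) (s * (1 - u)) * JT α β γ j m (s * u) (s * (1 - u)) *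
        ((s * u) ^ α * (s * (1 - u)) ^ β * (1 - s * u - s * (1 - u)) ^ γ)) =
      (J (2 * k + α + β + 1) γ (n - k) (1 - 2 * s) *
          J (2 * j + α + β + 1) γ (m - j) (1 - 2 * s) *
          (s ^ ((k + j : ℕ) + α + β + 1) * (1 - s) ^ γ)) *
        (J α β k (1 - 2 * u) * J α β j (1 - 2 * u) * (u ^ α * (1 - u) ^ β)) := by
  have hsum : s * u + s * (1 - u) = s := by ring
  have hdiff : (s * (1 - u) - s * u) / s = 1 - 2 * u := by field_simp; ring
  simp only [JT, hsum, hdiff,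
    show 1 - 2 * (s * u) - 2 * (s * (1 - u)) = 1 - 2 * s by ring,
    show 1 - s * u - s * (1 - u) = 1 - s by ring,
    mul_rpow hs.le hu.1, mul_rpow hs.le (sub_nonneg.2 hu.2)]
  rw [rpow_add hs, rpow_add hs, rpow_add hs, rpow_one, rpow_natCast]
  ring

theorem stmt12 (α β γ : ℝ) (hα : -1 < α) (hβ : -1 < β) (hγ : -1 < γ)
    (k n j m : ℕ) (hk : k ≤ n) (hj : j ≤ m) (hne : (k, n) ≠ (j, m)) :
    ∫ p in Tset, JT α β γ k n p.1 p.2 * JT α β γ j m p.1 p.2 *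
      (p.1 ^ α * p.2 ^ β * (1 - p.1 - p.2) ^ γ) = 0 := by
  refine (setIntegral_Tset_eq_mul_of_separable _ _ fun s u hs hu =>
    mul_JT_mul_JT_mul_weight_collapsed α β γ k n j m hs hu).trans ?_
  rcases eq_or_ne k j with rfl | hkj
  · have hnm : n - k ≠ m - k := by grind
    have hpar : -1 < 2 * (k : ℝ) + α + β + 1 := by linarith [(k.cast_nonneg : (0 : ℝ) ≤ k)]
    rw [Nat.cast_add, ← two_mul, integral_J_mul_J_eq_zero hpar hγ hnm, zero_mul]
  · rw [integral_J_mul_J_eq_zero hα hβ hkj, mul_zero]
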